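/- Let φ : [0,π] → ℝ^N be continuous and c ∈ ℝ be such that 1 + c·∫₀ˣ |φ(t)|² dt > 0 for all x ∈ [0,π]. Then the matrix-valued function K(x,y) := −c·φ(x)·φ(y)ᵀ / (1 + c·∫₀ˣ |φ(t)|² dt) satisfies the integral equation K(x,y) + c·φ(x)·φ(y)ᵀ + ∫₀ˣ K(x,t)·(c·φ(t)·φ(y)ᵀ) dt = 0 for all 0 ≤ y ≤ x ≤ π. Equivalently, with F(x,y) := c·φ(x)·φ(y)ᵀ one has K(x,y) = −F(x,y)/(1 + c·∫₀ˣ |φ(t)|² dt). -/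
import Mathlib

open Matrix MeasureTheory Set Filter

attribute [local instance] Matrix.normedAddCommGroup Matrix.normedSpace

lemma vmm_mul {N : ℕ} (u v w z : Fin N → ℝ) :
    Matrix.vecMulVec u v * Matrix.vecMulVec w z = (v ⬝ᵥ w) • Matrix.vecMulVec u z := by
  ext i j
  simp [Matrix.mul_apply, Matrix.vecMulVec_apply, dotProduct, Finset.sum_mul,
    Finset.mul_sum]
  congr 1; ext k; ring

theorem rank_one_kernel_solves_integral_equation
    (N : ℕ) (hN : 1 ≤ N)
    (φ : ℝ → Fin N → ℝ) (hφ : ContinuousOn φ (Set.Icc 0 Real.pi))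
    (c : ℝ)
    (hc : ∀ x ∈ Set.Icc (0:ℝ) Real.pi, 0 < 1 + c * ∫ t in (0:ℝ)..x, φ t ⬝ᵥ φ t)
    (K : ℝ → ℝ → Matrix (Fin N) (Fin N) ℝ)
    (hK : ∀ x y : ℝ, K x y
      = -((c / (1 + c * ∫ t in (0:ℝ)..x, φ t ⬝ᵥ φ t)) • Matrix.vecMulVec (φ x) (φ y))) :
    (∀ x y : ℝ, 0 ≤ y → y ≤ x → x ≤ Real.pi →
      K x y + c • Matrix.vecMulVec (φ x) (φ y)
        + (∫ t in (0:ℝ)..x, K x t * (c • Matrix.vecMulVec (φ t) (φ y))) = 0) ∧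
    (∀ x y : ℝ, K x y
      = -((1 + c * ∫ t in (0:ℝ)..x, φ t ⬝ᵥ φ t)⁻¹ • (c • Matrix.vecMulVec (φ x) (φ y)))) := by
  constructor
  · intro x y hy hyx hxπ
    set I := ∫ t in (0:ℝ)..x, φ t ⬝ᵥ φ t with hI
    have hd : 0 < 1 + c * I := hc x ⟨le_trans hy hyx, hxπ⟩
    have hdn : (1 + c * I) ≠ 0 := ne_of_gt hd
    have hcont : ContinuousOn (fun t => φ t ⬝ᵥ φ t) (Set.Icc 0 Real.pi) := by
      unfold dotProduct
      apply continuousOn_finset_sum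
      intro i _
      exact ((continuous_apply i).comp_continuousOn hφ).mul
        ((continuous_apply i).comp_continuousOn hφ)
    have hint : IntervalIntegrable (fun t => φ t ⬝ᵥ φ t) volume 0 x := by
      apply (hcont.mono ?_).intervalIntegrable
      rw [Set.uIcc_of_le (le_trans hy hyx)]
      exact Set.Icc_subset_Icc le_rfl hxπ
    have hrw : ∀ t : ℝ, K x t * (c • Matrix.vecMulVec (φ t) (φ y))
        = ((-(c / (1 + c * I)) * c) * (φ t ⬝ᵥ φ t)) • Matrix.vecMulVec (φ x) (φ y) := by
      intro t
      rw [hK, ← hI, ← neg_smul, smul_mul_assoc, mul_smul_comm, vmm_mul, smul_smul, smul_smul]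

    rw [intervalIntegral.integral_congr (fun t _ => hrw t),
      intervalIntegral.integral_smul_const, intervalIntegral.integral_const_mul, ← hI,
      hK, ← hI, ← neg_smul, ← add_smul, ← add_smul]
    have : -(c / (1 + c * I)) + c + -(c / (1 + c * I)) * c * I = 0 := by
      field_simp
      ring
    rw [this, zero_smul]
  · intro x y
    rw [hK, smul_smul, div_eq_mul_inv, mul_comm]
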